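/- arXiv:1909.00555 — 6 statements merged into one kernel-verified Lean document; each statement's English description precedes it below -/
import Mathlib

section
/- Let N ⊆ ℝⁿ × ℝᵐ be open and let f = (f_a, f_b) : N → ℝ^{n−m̃} × ℝ^{m̃} be smooth with rank ∂_u f(x,u) = rank ∂_u f_b(x,u) = m̃ for all (x,u) ∈ N. Then around every point of N there exists a smooth map f̃_a = f̃_a(x, w), w ∈ ℝ^{m̃}, such that f_a(x,u) = f̃_a(x, f_b(x,u)) holds locally; consequently, with the new input ũ := f_b(x,u) the sampled-data system x_{a,1} = f_a(x,u), x_{b,1} = f_b(x,u) takes the form x_{a,1} = f̃_a(x, ũ), x_{b,1} = ũ. -/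
/-- The rank of the partial derivative with respect to the input `u` of a map
`g` defined on state-input pairs, at the point `p`. -/
noncomputable def uRank {n m : ℕ} {F : Type*} [NormedAddCommGroup F] [NormedSpace ℝ F]
    (g : (Fin n → ℝ) × (Fin m → ℝ) → F) (p : (Fin n → ℝ) × (Fin m → ℝ)) : ℕ :=
  Module.finrank ℝ (LinearMap.range ((fderiv ℝ (fun u => g (p.1, u)) p.2 : (Fin m → ℝ) →ₗ[ℝ] F)))

/-!
Put `g(x, u) = (x, f_b(x, u))`. The rank conditions say that `∂_u f_b` is onto and that
`ker ∂_u f_b ⊆ ker ∂_u f_a`, so `Dg` is onto and `ker Dg ⊆ ker Df_a` on `N`. Completing `g` by a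
linear projection `π` onto `ker Dg(p)` gives a local diffeomorphism `Φ = (g, π)`, and in these
coordinates `f_a ∘ Φ⁻¹` has vanishing derivative in the `π`-directions, hence is constant along
them on a product ball: `f_a = f̃_a ∘ g` with `f̃_a(z) = f_a(Φ⁻¹(z, π p))`.
-/

open Set Metric

namespace LinearMap

variable {K V W₁ W₂ : Type*} [Field K] [AddCommGroup V] [Module K V] [FiniteDimensional K V]
  [AddCommGroup W₁] [Module K W₁] [AddCommGroup W₂] [Module K W₂]

theorem ker_le_ker_of_finrank_range_prod_le (f : V →ₗ[K] W₁) (g : V →ₗ[K] W₂)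
    (h : Module.finrank K (range (f.prod g)) ≤ Module.finrank K (range g)) : ker g ≤ ker f := by
  have hker : ker (f.prod g) = ker g := by
    refine Submodule.eq_of_le_of_finrank_le (ker_prod f g ▸ inf_le_right) ?_
    have := finrank_range_add_finrank_ker (f.prod g)
    have := finrank_range_add_finrank_ker g
    omega
  rw [← hker, ker_prod]
  exact inf_le_left

end LinearMap

namespace ContinuousLinearMap

variable {R X U Y Z : Type*} [Ring R] [TopologicalSpace X] [AddCommGroup X] [Module R X]
  [TopologicalSpace U] [AddCommGroup U] [Module R U] [TopologicalSpace Y] [AddCommGroup Y]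
  [Module R Y] [TopologicalSpace Z] [AddCommGroup Z] [Module R Z]

theorem ker_fst_prod_le_ker {φ : X × U →L[R] Y} {ψ : X × U →L[R] Z}
    (h : (φ ∘L inr R X U).ker ≤ (ψ ∘L inr R X U).ker) : ((fst R X U).prod φ).ker ≤ ψ.ker := by
  rintro ⟨x, u⟩ hv
  obtain ⟨rfl, hu⟩ : x = 0 ∧ φ (0, u) = 0 := by
    have hv : ((fst R X U).prod φ) (x, u) = 0 := hv
    simp_all
  exact h hu

theorem range_fst_prod_eq_top {φ : X × U →L[R] Y} (h : (φ ∘L inr R X U).range = ⊤) :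
    ((fst R X U).prod φ).range = ⊤ := by
  refine eq_top_iff.2 fun ⟨x, y⟩ _ => ?_
  obtain ⟨u, hu⟩ : y - φ (x, 0) ∈ (φ ∘L inr R X U).range := h ▸ Submodule.mem_top
  refine ⟨(x, u), ?_⟩
  have : φ (x, u) = φ (x, 0) + φ (0, u) := by rw [← map_add, Prod.mk_add_mk, add_zero, zero_add]
  simp_all

theorem exists_equiv_prod_ker {𝕜 E F : Type*} [NontriviallyNormedField 𝕜] [CompleteSpace 𝕜]
    [NormedAddCommGroup E] [NormedSpace 𝕜 E] [CompleteSpace E] [NormedAddCommGroup F]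
    [NormedSpace 𝕜 F] [FiniteDimensional 𝕜 F] (L : E →L[𝕜] F) (hL : L.range = ⊤) :
    ∃ π : E →L[𝕜] L.ker, ∃ e : E ≃L[𝕜] F × L.ker, (e : E →L[𝕜] F × L.ker) = L.prod π := by
  obtain ⟨π, hπ⟩ := L.ker_closedComplemented_of_finiteDimensional_range
  have := FiniteDimensional.complete 𝕜 F
  exact ⟨π, equivProdOfSurjectiveOfIsCompl L π hL (LinearMap.range_eq_of_proj hπ)
    (LinearMap.isCompl_of_proj hπ), rfl⟩

end ContinuousLinearMap

theorem isOpen_setOf_hasFDerivAt_equiv {𝕜 E F : Type*} [NontriviallyNormedField 𝕜]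
    [NormedAddCommGroup E] [NormedSpace 𝕜 E] [CompleteSpace E] [NormedAddCommGroup F]
    [NormedSpace 𝕜 F] {f : E → F} {s : Set E} {r : WithTop ℕ∞} (hs : IsOpen s)
    (hf : ContDiffOn 𝕜 r f s) (hr : r ≠ 0) :
    IsOpen {x | x ∈ s ∧ ∃ e : E ≃L[𝕜] F, HasFDerivAt f (e : E →L[𝕜] F) x} := by
  have : {x | x ∈ s ∧ ∃ e : E ≃L[𝕜] F, HasFDerivAt f (e : E →L[𝕜] F) x} =
      s ∩ fderiv 𝕜 f ⁻¹' range ((↑) : (E ≃L[𝕜] F) → E →L[𝕜] F) := by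
    ext x
    refine ⟨fun ⟨hx, e, he⟩ => ⟨hx, e, he.fderiv.symm⟩, fun ⟨hx, e, he⟩ => ⟨hx, e, ?_⟩⟩
    rw [he]
    exact ((hf.differentiableOn hr x hx).differentiableAt (hs.mem_nhds hx)).hasFDerivAt
  rw [this]
  exact (hf.continuousOn_fderiv_of_isOpen hs (ENat.one_le_iff_ne_zero_withTop.2 hr))
    |>.isOpen_inter_preimage hs ContinuousLinearEquiv.isOpen

section FunctionalDependence

variable {E F C H : Type*} [NormedAddCommGroup E] [NormedSpace ℝ E] [NormedAddCommGroup F]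
  [NormedSpace ℝ F] [NormedAddCommGroup C] [NormedSpace ℝ C] [NormedAddCommGroup H]
  [NormedSpace ℝ H]

theorem apply_prodMk_eq_of_fderiv_comp_inr_eq_zero {G : F × C → H} {z : F} {c₀ : C} {ε : ℝ}
    (hG : ∀ c ∈ ball c₀ ε, ∃ D : F × C →L[ℝ] H, HasFDerivAt G D (z, c) ∧
      D ∘L ContinuousLinearMap.inr ℝ F C = 0)
    {c : C} (hc : c ∈ ball c₀ ε) : G (z, c) = G (z, c₀) := by
  have hslice : ∀ c ∈ ball c₀ ε, HasFDerivAt (fun c => G (z, c)) (0 : C →L[ℝ] H) c := by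
    intro c hc
    obtain ⟨D, hD, hD0⟩ := hG c hc
    exact hD0 ▸ hD.comp c (hasFDerivAt_prodMk_right z c)
  exact isOpen_ball.is_const_of_fderiv_eq_zero (f := fun c => G (z, c))
    (convex_ball c₀ ε).isPreconnected
    (fun c hc => (hslice c hc).differentiableAt.differentiableWithinAt)
    (fun c hc => (hslice c hc).fderiv) hc (mem_ball_self (pos_of_mem_ball hc))

theorem OpenPartialHomeomorph.exists_hasFDerivAt_comp_symm_comp_inr_eq_zero
    (Ψ : OpenPartialHomeomorph E (F × C)) {h : E → H} {y : F × C} (hy : y ∈ Ψ.target)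
    {e : E ≃L[ℝ] F × C} (he : HasFDerivAt Ψ (e : E →L[ℝ] F × C) (Ψ.symm y))
    {h' : E →L[ℝ] H} (hh : HasFDerivAt h h' (Ψ.symm y))
    (hker : (ContinuousLinearMap.fst ℝ F C ∘L (e : E →L[ℝ] F × C)).ker ≤ h'.ker) :
    ∃ D : F × C →L[ℝ] H, HasFDerivAt (h ∘ Ψ.symm) D y ∧
      D ∘L ContinuousLinearMap.inr ℝ F C = 0 := by
  refine ⟨h' ∘L (e.symm : F × C →L[ℝ] E), hh.comp y (Ψ.hasFDerivAt_symm hy he), ?_⟩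
  ext k
  exact hker (by simp)

theorem exists_ball_apply_prodMk_eq_of_fderiv_comp_inr_eq_zero {G : F × C → H} {T : Set (F × C)}
    {r : WithTop ℕ∞} (hT : IsOpen T) (hG : ContDiffOn ℝ r G T)
    (hvert : ∀ y ∈ T, ∃ D : F × C →L[ℝ] H, HasFDerivAt G D y ∧
      D ∘L ContinuousLinearMap.inr ℝ F C = 0)
    {y₀ : F × C} (hy₀ : y₀ ∈ T) :
    ∃ ε > 0, ContDiffOn ℝ r (fun z => G (z, y₀.2)) (ball y₀.1 ε) ∧
      ∀ z ∈ ball y₀.1 ε, ∀ c ∈ ball y₀.2 ε, G (z, c) = G (z, y₀.2) := by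
  obtain ⟨ε, hε, hεT⟩ := Metric.isOpen_iff.mp hT _ hy₀
  have hεT' : ∀ z ∈ ball y₀.1 ε, ∀ c ∈ ball y₀.2 ε, (z, c) ∈ T := fun z hz c hc =>
    hεT (ball_prod_same y₀.1 y₀.2 ε ▸ mk_mem_prod hz hc)
  refine ⟨ε, hε, fun z hz => ?_, fun z hz c hc =>
    apply_prodMk_eq_of_fderiv_comp_inr_eq_zero (fun c hc => hvert _ (hεT' z hz c hc)) hc⟩
  have hzT := hεT' z hz _ (mem_ball_self hε)
  exact ((hG.contDiffAt (hT.mem_nhds hzT)).comp z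
    (contDiffAt_id.prodMk contDiffAt_const)).contDiffWithinAt

theorem exists_contDiffOn_comp_eq_of_ker_fderiv_le [CompleteSpace E] [FiniteDimensional ℝ F]
    {g : E → F} {h : E → H} {N : Set E} {r : WithTop ℕ∞} (hN : IsOpen N) (hr : r ≠ 0)
    (hg : ContDiffOn ℝ r g N) (hh : ContDiffOn ℝ r h N)
    (hker : ∀ q ∈ N, (fderiv ℝ g q).ker ≤ (fderiv ℝ h q).ker)
    {p : E} (hp : p ∈ N) (hsurj : (fderiv ℝ g p).range = ⊤) :
    ∃ V : Set E, IsOpen V ∧ p ∈ V ∧ V ⊆ N ∧ ∃ W : Set F, IsOpen W ∧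
      ∃ k : F → H, ContDiffOn ℝ r k W ∧ ∀ q ∈ V, g q ∈ W ∧ h q = k (g q) := by
  set K := (fderiv ℝ g p).ker
  obtain ⟨π, e, he⟩ := (fderiv ℝ g p).exists_equiv_prod_ker hsurj
  set Φ : E → F × K := fun q => (g q, π q)
  have hΦ : ContDiffOn ℝ r Φ N := hg.prodMk π.contDiff.contDiffOn
  have hΦ' : ∀ q ∈ N, HasFDerivAt Φ ((fderiv ℝ g q).prod π) q := fun q hq =>
    ((hg.differentiableOn hr q hq).differentiableAt (hN.mem_nhds hq)).hasFDerivAt.prodMk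
      π.hasFDerivAt
  have hΦp : HasFDerivAt Φ (e : E →L[ℝ] F × K) p := he ▸ hΦ' p hp
  set Ψ := (hΦ.contDiffAt (hN.mem_nhds hp)).toOpenPartialHomeomorph Φ hΦp hr
  have hΨ : ⇑Ψ = Φ := rfl
  have hpΨ : p ∈ Ψ.source :=
    (hΦ.contDiffAt (hN.mem_nhds hp)).mem_toOpenPartialHomeomorph_source hΦp hr
  -- the inverse function theorem controls `DΦ` only at `p`; on `T` it stays invertible
  set T := Ψ.target ∩
    Ψ.symm ⁻¹' {q | q ∈ N ∧ ∃ e : E ≃L[ℝ] F × K, HasFDerivAt Φ (e : E →L[ℝ] F × K) q}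
  have hTopen : IsOpen T := Ψ.continuousOn_symm.isOpen_inter_preimage Ψ.open_target
    (isOpen_setOf_hasFDerivAt_equiv hN hΦ hr)
  have hpT : Φ p ∈ T := by
    refine ⟨(hΦ.contDiffAt (hN.mem_nhds hp)).image_mem_toOpenPartialHomeomorph_target hΦp hr, ?_⟩
    rw [Set.mem_preimage, ← hΨ, Ψ.left_inv hpΨ]
    exact ⟨hp, e, hΦp⟩
  have hsmooth : ContDiffOn ℝ r (h ∘ Ψ.symm) T := fun y ⟨hy, hyN, _, he'⟩ =>
    ((hh.contDiffAt (hN.mem_nhds hyN)).comp y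
      (Ψ.contDiffAt_symm hy he' (hΦ.contDiffAt (hN.mem_nhds hyN)))).contDiffWithinAt
  have hvert : ∀ y ∈ T, ∃ D : F × K →L[ℝ] H, HasFDerivAt (h ∘ Ψ.symm) D y ∧
      D ∘L ContinuousLinearMap.inr ℝ F K = 0 := by
    rintro y ⟨hy, hyN, e', he'⟩
    refine Ψ.exists_hasFDerivAt_comp_symm_comp_inr_eq_zero hy he'
      ((hh.differentiableOn hr _ hyN).differentiableAt (hN.mem_nhds hyN)).hasFDerivAt ?_
    rw [he'.unique (hΦ' _ hyN), ContinuousLinearMap.fst_comp_prod]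
    exact hker _ hyN
  obtain ⟨ε, hε, hk, hconst⟩ :=
    exists_ball_apply_prodMk_eq_of_fderiv_comp_inr_eq_zero hTopen hsmooth hvert hpT
  refine ⟨N ∩ Ψ.source ∩ Φ ⁻¹' ball (Φ p) ε, ?_, ⟨⟨hp, hpΨ⟩, mem_ball_self hε⟩,
    fun q hq => hq.1.1, ball (g p) ε, isOpen_ball, _, hk, ?_⟩
  · exact (hΦ.continuousOn.mono inter_subset_left).isOpen_inter_preimage
      (hN.inter Ψ.open_source) isOpen_ball
  · rintro q ⟨⟨-, hq⟩, hqε⟩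
    rw [← ball_prod_same] at hqε
    exact ⟨hqε.1, (congrArg h (Ψ.left_inv hq).symm).trans (hconst _ hqε.1 _ hqε.2)⟩

end FunctionalDependence

section Graph

variable {n m : ℕ} {Fa Fb : Type*} [NormedAddCommGroup Fa] [NormedSpace ℝ Fa]
  [NormedAddCommGroup Fb] [NormedSpace ℝ Fb]

theorem uRank_eq_finrank_range {g : (Fin n → ℝ) × (Fin m → ℝ) → Fb}
    {p : (Fin n → ℝ) × (Fin m → ℝ)} {g' : (Fin n → ℝ) × (Fin m → ℝ) →L[ℝ] Fb}
    (hg : HasFDerivAt g g' p) :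
    uRank g p = Module.finrank ℝ (g' ∘L ContinuousLinearMap.inr ℝ _ _).range := by
  have hpartial : HasFDerivAt (fun u => g (p.1, u)) (g' ∘L ContinuousLinearMap.inr ℝ _ _) p.2 :=
    hg.comp p.2 (hasFDerivAt_prodMk_right p.1 p.2)
  rw [uRank, hpartial.fderiv]

theorem ker_fst_prod_fderiv_le_of_uRank_prod_eq {fa : (Fin n → ℝ) × (Fin m → ℝ) → Fa}
    {fb : (Fin n → ℝ) × (Fin m → ℝ) → Fb} {q : (Fin n → ℝ) × (Fin m → ℝ)}
    (hfa : DifferentiableAt ℝ fa q) (hfb : DifferentiableAt ℝ fb q)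
    (h : uRank (fun q => (fa q, fb q)) q = uRank fb q) :
    ((ContinuousLinearMap.fst ℝ _ _).prod (fderiv ℝ fb q)).ker ≤ (fderiv ℝ fa q).ker := by
  refine ContinuousLinearMap.ker_fst_prod_le_ker
    (LinearMap.ker_le_ker_of_finrank_range_prod_le _ _ (le_of_eq ?_))
  calc _ = uRank (fun q => (fa q, fb q)) q :=
        (uRank_eq_finrank_range (hfa.hasFDerivAt.prodMk hfb.hasFDerivAt)).symm
    _ = uRank fb q := h
    _ = _ := uRank_eq_finrank_range hfb.hasFDerivAt

theorem range_fst_prod_fderiv_eq_top_of_uRank_eq {mt : ℕ}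
    {fb : (Fin n → ℝ) × (Fin m → ℝ) → (Fin mt → ℝ)} {p : (Fin n → ℝ) × (Fin m → ℝ)}
    (hfb : DifferentiableAt ℝ fb p) (h : uRank fb p = mt) :
    ((ContinuousLinearMap.fst ℝ _ _).prod (fderiv ℝ fb p)).range = ⊤ := by
  refine ContinuousLinearMap.range_fst_prod_eq_top (Submodule.eq_top_of_finrank_eq ?_)
  rw [← uRank_eq_finrank_range hfb.hasFDerivAt, h, Module.finrank_fin_fun]

end Graph

theorem stmt_0_general (n m mt na : ℕ)
    (N : Set ((Fin n → ℝ) × (Fin m → ℝ))) (hN : IsOpen N)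
    (fa : (Fin n → ℝ) × (Fin m → ℝ) → (Fin na → ℝ))
    (fb : (Fin n → ℝ) × (Fin m → ℝ) → (Fin mt → ℝ))
    (hfa : ContDiffOn ℝ (⊤ : ℕ∞) fa N) (hfb : ContDiffOn ℝ (⊤ : ℕ∞) fb N)
    (hrank : ∀ p ∈ N, uRank (fun q => (fa q, fb q)) p = mt)
    (hrankb : ∀ p ∈ N, uRank fb p = mt) :
    ∀ p ∈ N, ∃ V : Set ((Fin n → ℝ) × (Fin m → ℝ)), IsOpen V ∧ p ∈ V ∧ V ⊆ N ∧
      ∃ W : Set ((Fin n → ℝ) × (Fin mt → ℝ)), IsOpen W ∧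
        ∃ fta : (Fin n → ℝ) × (Fin mt → ℝ) → (Fin na → ℝ),
          ContDiffOn ℝ (⊤ : ℕ∞) fta W ∧
          ∀ q ∈ V, (q.1, fb q) ∈ W ∧ fa q = fta (q.1, fb q) := by
  intro p hp
  have hne : ((⊤ : ℕ∞) : WithTop ℕ∞) ≠ 0 := by simp
  have hfa' : ∀ q ∈ N, DifferentiableAt ℝ fa q := fun q hq =>
    (hfa.differentiableOn hne q hq).differentiableAt (hN.mem_nhds hq)
  have hfb' : ∀ q ∈ N, DifferentiableAt ℝ fb q := fun q hq =>
    (hfb.differentiableOn hne q hq).differentiableAt (hN.mem_nhds hq)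
  have hg' : ∀ q ∈ N, fderiv ℝ (fun q => (q.1, fb q)) q =
      (ContinuousLinearMap.fst ℝ _ _).prod (fderiv ℝ fb q) := fun q hq =>
    (hasFDerivAt_fst.prodMk (hfb' q hq).hasFDerivAt).fderiv
  refine exists_contDiffOn_comp_eq_of_ker_fderiv_le hN hne (contDiff_fst.contDiffOn.prodMk hfb)
    hfa (fun q hq => ?_) hp ?_
  · rw [hg' q hq]
    exact ker_fst_prod_fderiv_le_of_uRank_prod_eq (hfa' q hq) (hfb' q hq)
      ((hrank q hq).trans (hrankb q hq).symm)
  · rw [hg' p hp]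
    exact range_fst_prod_fderiv_eq_top_of_uRank_eq (hfb' p hp) (hrankb p hp)

/-- Let `N ⊆ ℝⁿ × ℝᵐ` be open and let `f = (f_a, f_b) : N → ℝ^{n−m̃} × ℝ^{m̃}` be
smooth with `rank ∂_u f(x,u) = rank ∂_u f_b(x,u) = m̃` on `N`.  Then around
every point of `N` there is a smooth map `f̃_a = f̃_a(x,w)`, `w ∈ ℝ^{m̃}`, such
that `f_a(x,u) = f̃_a(x, f_b(x,u))` holds locally; consequently, with the new
input `ũ := f_b(x,u)` the sampled-data system `x_{a,1} = f_a(x,u)`,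
`x_{b,1} = f_b(x,u)` takes the form `x_{a,1} = f̃_a(x,ũ)`, `x_{b,1} = ũ`. -/
theorem stmt_0 (n m mt na : ℕ) (hna : n = na + mt) (hmt : mt ≤ m)
    (N : Set ((Fin n → ℝ) × (Fin m → ℝ))) (hN : IsOpen N)
    (fa : (Fin n → ℝ) × (Fin m → ℝ) → (Fin na → ℝ))
    (fb : (Fin n → ℝ) × (Fin m → ℝ) → (Fin mt → ℝ))
    (hfa : ContDiffOn ℝ (⊤ : ℕ∞) fa N) (hfb : ContDiffOn ℝ (⊤ : ℕ∞) fb N)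
    (hrank : ∀ p ∈ N, uRank (fun q => (fa q, fb q)) p = mt)
    (hrankb : ∀ p ∈ N, uRank fb p = mt) :
    ∀ p ∈ N, ∃ V : Set ((Fin n → ℝ) × (Fin m → ℝ)), IsOpen V ∧ p ∈ V ∧ V ⊆ N ∧
      ∃ W : Set ((Fin n → ℝ) × (Fin mt → ℝ)), IsOpen W ∧
        ∃ fta : (Fin n → ℝ) × (Fin mt → ℝ) → (Fin na → ℝ),
          ContDiffOn ℝ (⊤ : ℕ∞) fta W ∧
          ∀ q ∈ V, (q.1, fb q) ∈ W ∧ fa q = fta (q.1, fb q) :=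
  stmt_0_general n m mt na N hN fa fb hfa hfb hrank hrankb
end

section
/- Let S be the sampled-data system that is the series connection of a Brunovsky normal form B and a complement C, i.e. x_{a,1} = f_a(x_a, x_b, v), x_{b,1} = w, with state (x_a, x_b) ∈ ℝ^{n_a} × ℝ^{n_b} and inputs (v, w) ∈ ℝ^{m_v} × ℝ^{n_b}, where f_a is smooth on an open set. If the system S is flat, then the complement C, i.e. the sampled-data system x_{a,1} = f_a(x_a, z) with state x_a ∈ ℝ^{n_a} and input z = (x_b, v) ∈ ℝ^{n_b + m_v}, is flat, too. -/
/-- A trajectory of the sampled-data system `x₁ = f(x,u)` on the set `N`: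
`(x(i), u(i)) ∈ N` and `x(i+1) = f(x(i), u(i))` for all `i`. -/
def IsTrajectory {X U : Type*} (N : Set (X × U)) (f : X × U → X)
    (x : ℕ → X) (u : ℕ → U) : Prop :=
  ∀ i : ℕ, (x i, u i) ∈ N ∧ x (i + 1) = f (x i, u i)

/-- The window `Yᵢ := (yʲ(i+k))_{1≤j≤m, 0≤k≤rⱼ}` of an output sequence `y`. -/
def window {m : ℕ} (r : Fin m → ℕ) (y : ℕ → Fin m → ℝ) (i : ℕ) :
    (j : Fin m) → Fin (r j + 1) → ℝ :=
  fun j k => y (i + (k : ℕ)) j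

/-- `(r, O, Hx, Hu)` is a flat parametrization of the sampled-data system
`x₁ = f(x,u)` on `N` with `m` flat outputs: `O` is an open set of tuples
`(yʲ_k)_{1≤j≤m, 0≤k≤rⱼ}`, `Hx`, `Hu` are smooth on `O`, (i) every output
sequence with windows in `O` produces a trajectory, (ii) every trajectory
arises in this way, and (iii) distinct output sequences produce distinct
trajectories. -/
def IsFlatParam {X U : Type*} [NormedAddCommGroup X] [NormedSpace ℝ X]
    [NormedAddCommGroup U] [NormedSpace ℝ U] (m : ℕ)
    (N : Set (X × U)) (f : X × U → X) (r : Fin m → ℕ)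
    (O : Set ((j : Fin m) → Fin (r j + 1) → ℝ))
    (Hx : ((j : Fin m) → Fin (r j + 1) → ℝ) → X)
    (Hu : ((j : Fin m) → Fin (r j + 1) → ℝ) → U) : Prop :=
  IsOpen O ∧ ContDiffOn ℝ (⊤ : ℕ∞) Hx O ∧ ContDiffOn ℝ (⊤ : ℕ∞) Hu O ∧
  (∀ y : ℕ → Fin m → ℝ, (∀ i, window r y i ∈ O) →
    IsTrajectory N f (fun i => Hx (window r y i)) (fun i => Hu (window r y i))) ∧
  (∀ x u, IsTrajectory N f x u → ∃ y : ℕ → Fin m → ℝ,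
    (∀ i, window r y i ∈ O) ∧
    ∀ i, x i = Hx (window r y i) ∧ u i = Hu (window r y i)) ∧
  (∀ y y' : ℕ → Fin m → ℝ, (∀ i, window r y i ∈ O) →
    (∀ i, window r y' i ∈ O) →
    (∀ i, Hx (window r y i) = Hx (window r y' i) ∧
      Hu (window r y i) = Hu (window r y' i)) →
    y = y')

/-- A non-redundant flat parametrization: a flat parametrization whose total
number of coordinates `∑ⱼ (rⱼ + 1)` is minimal. -/
def IsMinimalFlatParam {X U : Type*} [NormedAddCommGroup X] [NormedSpace ℝ X]
    [NormedAddCommGroup U] [NormedSpace ℝ U] (m : ℕ)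
    (N : Set (X × U)) (f : X × U → X) (r : Fin m → ℕ)
    (O : Set ((j : Fin m) → Fin (r j + 1) → ℝ))
    (Hx : ((j : Fin m) → Fin (r j + 1) → ℝ) → X)
    (Hu : ((j : Fin m) → Fin (r j + 1) → ℝ) → U) : Prop :=
  IsFlatParam m N f r O Hx Hu ∧
  ∀ (r' : Fin m → ℕ) (O' : Set ((j : Fin m) → Fin (r' j + 1) → ℝ))
    (Hx' : ((j : Fin m) → Fin (r' j + 1) → ℝ) → X)
    (Hu' : ((j : Fin m) → Fin (r' j + 1) → ℝ) → U),
    IsFlatParam m N f r' O' Hx' Hu' →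
    (∑ j : Fin m, (r j + 1)) ≤ ∑ j : Fin m, (r' j + 1)

/-- The sampled-data system `x₁ = f(x,u)` on `N` is flat (with respect to
forward shifts) with `m` flat outputs: it admits a non-redundant flat
parametrization. -/
def IsFlat {X U : Type*} [NormedAddCommGroup X] [NormedSpace ℝ X]
    [NormedAddCommGroup U] [NormedSpace ℝ U] (m : ℕ)
    (N : Set (X × U)) (f : X × U → X) : Prop :=
  ∃ (r : Fin m → ℕ) (O : Set ((j : Fin m) → Fin (r j + 1) → ℝ))
    (Hx : ((j : Fin m) → Fin (r j + 1) → ℝ) → X)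
    (Hu : ((j : Fin m) → Fin (r j + 1) → ℝ) → U),
    IsMinimalFlatParam m N f r O Hx Hu

/-!
A trajectory `(x_a, x_b; v, w)` of the series connection is determined by its complement
part `(x_a; x_b, v)`, because the Brunovsky input is the next Brunovsky state,
`w(i) = x_b(i+1)`; conversely every trajectory `(x_a; z)` of the complement extends to one of
the series connection by `x_b = z.1`, `w(i) = z(i+1).1`. So projecting a flat parametrization
of the series connection onto the complement's variables gives a flat parametrization of the
complement with the same flat outputs, and a minimal one exists since `ℕ` is well ordered.
-/

lemma isFlat_of_isFlatParam {X U : Type*} [NormedAddCommGroup X] [NormedSpace ℝ X]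
    [NormedAddCommGroup U] [NormedSpace ℝ U] {m : ℕ} {N : Set (X × U)} {f : X × U → X} {r : Fin m → ℕ}
    {O : Set ((j : Fin m) → Fin (r j + 1) → ℝ)}
    {Hx : ((j : Fin m) → Fin (r j + 1) → ℝ) → X} {Hu : ((j : Fin m) → Fin (r j + 1) → ℝ) → U}
    (h : IsFlatParam m N f r O Hx Hu) : IsFlat m N f := by
  classical
  have hsize : ∃ n : ℕ, ∃ r O Hx Hu, IsFlatParam m N f r O Hx Hu ∧ ∑ j, (r j + 1) = n :=
    ⟨_, r, O, Hx, Hu, h, rfl⟩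
  obtain ⟨r₀, O₀, Hx₀, Hu₀, h₀, hsum₀⟩ := Nat.find_spec hsize
  refine ⟨r₀, O₀, Hx₀, Hu₀, h₀, fun r' O' Hx' Hu' h' => ?_⟩
  rw [hsum₀]
  exact Nat.find_min' hsize ⟨r', O', Hx', Hu', h', rfl⟩

namespace SeriesConnection

variable {Xa Z V : Type*} (Ω : Set (Xa × Z × V)) (fa : Xa × Z × V → Xa)

/-- The series connection `x_{a,1} = f_a(x_a, x_b, v)`, `x_{b,1} = w` of the complement with
a Brunovsky normal form; state `(x_a, x_b)`, input `(v, w)`. -/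
def seriesSet : Set ((Xa × Z) × (V × Z)) := {p | (p.1.1, p.1.2, p.2.1) ∈ Ω}

def seriesMap : (Xa × Z) × (V × Z) → Xa × Z := fun p => (fa (p.1.1, p.1.2, p.2.1), p.2.2)

/-- The complement `x_{a,1} = f_a(x_a, z)` with input `z = (x_b, v)`. -/
def complementSet : Set (Xa × (Z × V)) := {p | (p.1, p.2.1, p.2.2) ∈ Ω}

def complementMap : Xa × (Z × V) → Xa := fun p => fa (p.1, p.2.1, p.2.2)

variable {Ω fa}

lemma isTrajectory_complement {x : ℕ → Xa × Z} {u : ℕ → V × Z}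
    (h : IsTrajectory (seriesSet Ω) (seriesMap fa) x u) :
    IsTrajectory (complementSet Ω) (complementMap fa) (fun i => (x i).1)
      (fun i => ((x i).2, (u i).1)) :=
  fun i => ⟨(h i).1, congrArg Prod.fst (h i).2⟩

lemma isTrajectory_series {xa : ℕ → Xa} {z : ℕ → Z × V}
    (h : IsTrajectory (complementSet Ω) (complementMap fa) xa z) :
    IsTrajectory (seriesSet Ω) (seriesMap fa) (fun i => (xa i, (z i).1))
      (fun i => ((z i).2, (z (i + 1)).1)) :=
  fun i => ⟨(h i).1, Prod.ext (h i).2 rfl⟩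

lemma trajectory_eq_of_complement_eq {x x' : ℕ → Xa × Z} {u u' : ℕ → V × Z}
    (h : IsTrajectory (seriesSet Ω) (seriesMap fa) x u)
    (h' : IsTrajectory (seriesSet Ω) (seriesMap fa) x' u')
    (hx : ∀ i, (x i).1 = (x' i).1) (hz : ∀ i, ((x i).2, (u i).1) = ((x' i).2, (u' i).1))
    (i : ℕ) : x i = x' i ∧ u i = u' i := by
  have hstate : ∀ i, x i = x' i := fun i => Prod.ext (hx i) (congrArg Prod.fst (hz i))
  have hw : (u i).2 = (u' i).2 :=
    calc (u i).2 = (x (i + 1)).2 := (congrArg Prod.snd (h i).2).symm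
      _ = (x' (i + 1)).2 := by rw [hstate]
      _ = (u' i).2 := congrArg Prod.snd (h' i).2
  exact ⟨hstate i, Prod.ext (congrArg Prod.snd (hz i)) hw⟩

end SeriesConnection

open SeriesConnection

section

variable {Xa Z V : Type*} [NormedAddCommGroup Xa] [NormedSpace ℝ Xa] [NormedAddCommGroup Z]
  [NormedSpace ℝ Z] [NormedAddCommGroup V] [NormedSpace ℝ V] {Ω : Set (Xa × Z × V)}
  {fa : Xa × Z × V → Xa}

lemma IsFlatParam.complement {m : ℕ} {r : Fin m → ℕ} {O : Set ((j : Fin m) → Fin (r j + 1) → ℝ)}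
    {Hx : ((j : Fin m) → Fin (r j + 1) → ℝ) → Xa × Z}
    {Hu : ((j : Fin m) → Fin (r j + 1) → ℝ) → V × Z}
    (h : IsFlatParam m (seriesSet Ω) (seriesMap fa) r O Hx Hu) :
    IsFlatParam m (complementSet Ω) (complementMap fa) r O (fun Y => (Hx Y).1)
      (fun Y => ((Hx Y).2, (Hu Y).1)) := by
  obtain ⟨hO, hHx, hHu, hgen, hsurj, hinj⟩ := h
  refine ⟨hO, hHx.fst, hHx.snd.prodMk hHu.fst, fun y hy => isTrajectory_complement (hgen y hy),
    fun xa z hC => ?_, fun y y' hy hy' heq => hinj y y' hy hy' ?_⟩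
  · obtain ⟨y, hy, hxu⟩ := hsurj _ _ (isTrajectory_series hC)
    exact ⟨y, hy, fun i => ⟨congrArg Prod.fst (hxu i).1,
      Prod.ext (congrArg Prod.snd (hxu i).1) (congrArg Prod.fst (hxu i).2)⟩⟩
  · exact trajectory_eq_of_complement_eq (hgen y hy) (hgen y' hy') (fun i => (heq i).1)
      (fun i => (heq i).2)

theorem IsFlat.complement {m : ℕ} (h : IsFlat m (seriesSet Ω) (seriesMap fa)) :
    IsFlat m (complementSet Ω) (complementMap fa) :=
  let ⟨_, _, _, _, hmin⟩ := h
  isFlat_of_isFlatParam hmin.1.complement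

end

theorem stmt_8_general (na nb mv : ℕ)
    (Ω : Set ((Fin na → ℝ) × (Fin nb → ℝ) × (Fin mv → ℝ)))
    (fa : (Fin na → ℝ) × (Fin nb → ℝ) × (Fin mv → ℝ) → (Fin na → ℝ))
    (hflatS : IsFlat (mv + nb)
      {p : ((Fin na → ℝ) × (Fin nb → ℝ)) × ((Fin mv → ℝ) × (Fin nb → ℝ)) |
        (p.1.1, p.1.2, p.2.1) ∈ Ω}
      (fun p => ((fa (p.1.1, p.1.2, p.2.1), p.2.2) :
        (Fin na → ℝ) × (Fin nb → ℝ)))) :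
    IsFlat (nb + mv)
      {p : (Fin na → ℝ) × ((Fin nb → ℝ) × (Fin mv → ℝ)) |
        (p.1, p.2.1, p.2.2) ∈ Ω}
      (fun p => fa (p.1, p.2.1, p.2.2)) := by
  rw [Nat.add_comm nb mv]
  exact hflatS.complement

/-- **Lemma al-01.**
Let `S` be the sampled-data system that is the series connection of a
Brunovsky normal form `B` and a complement `C`, i.e.
`x_{a,1} = f_a(x_a, x_b, v)`, `x_{b,1} = w`, with state
`(x_a, x_b) ∈ ℝ^{n_a} × ℝ^{n_b}` and inputs `(v, w) ∈ ℝ^{m_v} × ℝ^{n_b}`,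
where `f_a` is smooth on an open set `Ω`.  If `S` is flat, then the
complement `C`, i.e. the sampled-data system `x_{a,1} = f_a(x_a, z)` with
state `x_a ∈ ℝ^{n_a}` and input `z = (x_b, v) ∈ ℝ^{n_b + m_v}`, is flat,
too. -/
theorem stmt_8 (na nb mv : ℕ)
    (Ω : Set ((Fin na → ℝ) × (Fin nb → ℝ) × (Fin mv → ℝ))) (hΩ : IsOpen Ω)
    (fa : (Fin na → ℝ) × (Fin nb → ℝ) × (Fin mv → ℝ) → (Fin na → ℝ))
    (hfa : ContDiffOn ℝ (⊤ : ℕ∞) fa Ω)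
    (hflatS : IsFlat (mv + nb)
      {p : ((Fin na → ℝ) × (Fin nb → ℝ)) × ((Fin mv → ℝ) × (Fin nb → ℝ)) |
        (p.1.1, p.1.2, p.2.1) ∈ Ω}
      (fun p => ((fa (p.1.1, p.1.2, p.2.1), p.2.2) :
        (Fin na → ℝ) × (Fin nb → ℝ)))) :
    IsFlat (nb + mv)
      {p : (Fin na → ℝ) × ((Fin nb → ℝ) × (Fin mv → ℝ)) |
        (p.1, p.2.1, p.2.2) ∈ Ω}
      (fun p => fa (p.1, p.2.1, p.2.2)) :=
  stmt_8_general na nb mv Ω fa hflatS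
end

section
/- Let y : ℕ → ℝ be a sequence with y(i) ≠ 0 and y(i)³ + 1 ≠ 0 for all i. Define x¹(i) = y(i)³ y(i+1)/(y(i)³ + 1), x²(i) = y(i+1)/(y(i)³ + 1), and u(i) = y(i+2)(y(i)³ + 1)/(y(i+1)(y(i+1)³ + 1)). Then for all i ∈ ℕ: x¹(i+1) = (x¹(i) + x²(i))³ x²(i) u(i), x²(i+1) = x²(i) u(i), and moreover x¹(i)/x²(i) = y(i)³. Hence every such output sequence y parametrizes a trajectory of the system (ex-01), and y is recovered from the trajectory as the real cube root of x¹/x². -/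
/-- Let `y : ℕ → ℝ` with `y i ≠ 0` and `y i ^ 3 + 1 ≠ 0` for all `i`.  With
`x¹(i) = y(i)³ y(i+1)/(y(i)³+1)`, `x²(i) = y(i+1)/(y(i)³+1)` and
`u(i) = y(i+2)(y(i)³+1)/(y(i+1)(y(i+1)³+1))`, the sequences `(x¹,x²,u)` form a
trajectory of the example system (ex-01): `x¹(i+1) = (x¹(i)+x²(i))³ x²(i) u(i)`,
`x²(i+1) = x²(i) u(i)`, and moreover `x¹(i)/x²(i) = y(i)³`; hence every such
output sequence parametrizes a trajectory of (ex-01) and is recovered as the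
real cube root of `x¹/x²`. -/
theorem stmt_12 (y : ℕ → ℝ) (hy : ∀ i, y i ≠ 0) (hy1 : ∀ i, y i ^ 3 + 1 ≠ 0)
    (x1 x2 u : ℕ → ℝ)
    (hx1 : ∀ i, x1 i = y i ^ 3 * y (i + 1) / (y i ^ 3 + 1))
    (hx2 : ∀ i, x2 i = y (i + 1) / (y i ^ 3 + 1))
    (hu : ∀ i, u i = y (i + 2) * (y i ^ 3 + 1) / (y (i + 1) * (y (i + 1) ^ 3 + 1))) :
    ∀ i : ℕ,
      x1 (i + 1) = (x1 i + x2 i) ^ 3 * x2 i * u i ∧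
      x2 (i + 1) = x2 i * u i ∧
      x1 i / x2 i = y i ^ 3 := by
  intro i
  have h0 := hy i
  have h1 := hy i.succ
  have h01 := hy1 i
  have h11 := hy1 i.succ
  have key : x1 i + x2 i = y (i + 1) := by
    rw [hx1, hx2]
    field_simp
  refine ⟨?_, ?_, ?_⟩
  · rw [hx1 (i + 1), key, hx2, hu]
    show _ = _ * (y (i + 1) / _) * _
    field_simp
  · rw [hx2 (i + 1), hx2, hu]
    show _ = y (i + 1) / _ * _
    field_simp
  · rw [hx1, hx2]
    field_simp
end

section
/- Let (x¹, x², u) and (x̂¹, x̂², û) be two trajectories of the system (ex-01), each satisfying x²(i) ≠ 0 and x¹(i) + x²(i) ≠ 0 for all i (and likewise for the hatted trajectory). If the output sequences agree, i.e. x¹(i)/x²(i) = x̂¹(i)/x̂²(i) for all i ∈ ℕ, then the trajectories coincide: x¹(i) = x̂¹(i), x²(i) = x̂²(i) and u(i) = û(i) for all i. In other words, the output y = x¹/x² determines the trajectory of (ex-01) uniquely on this domain. -/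
/-!
One step of (ex-01) multiplies both coordinates by the common factor `x² u`, up to the cube of
`x¹ + x²` in the first one, so the output at time `i + 1` is `(x¹(i) + x²(i))³`. Since cubing is
injective on `ℝ`, the output sequence therefore determines `x¹ + x²` at every time, and together
with the ratio `x¹ / x²` this pins down the state; `u(i) = x²(i+1) / x²(i)` follows.
-/

def IsEx01Trajectory (x1 x2 u : ℕ → ℝ) : Prop :=
  ∀ i, x1 (i + 1) = (x1 i + x2 i) ^ 3 * x2 i * u i ∧ x2 (i + 1) = x2 i * u i

namespace IsEx01Trajectory

variable {x1 x2 u : ℕ → ℝ}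

lemma output_succ (htraj : IsEx01Trajectory x1 x2 u) (hx2 : ∀ i, x2 i ≠ 0) (i : ℕ) :
    x1 (i + 1) / x2 (i + 1) = (x1 i + x2 i) ^ 3 := by
  have hx1 : x1 (i + 1) = (x1 i + x2 i) ^ 3 * x2 (i + 1) := by
    rw [(htraj i).1, (htraj i).2, mul_assoc]
  rw [hx1, mul_div_cancel_right₀ _ (hx2 (i + 1))]

lemma add_eq_of_output_eq {xh1 xh2 uh : ℕ → ℝ} (htraj : IsEx01Trajectory x1 x2 u)
    (htrajh : IsEx01Trajectory xh1 xh2 uh) (hx2 : ∀ i, x2 i ≠ 0) (hxh2 : ∀ i, xh2 i ≠ 0)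
    (hout : ∀ i, x1 i / x2 i = xh1 i / xh2 i) (i : ℕ) :
    x1 i + x2 i = xh1 i + xh2 i := by
  have hcube := hout (i + 1)
  rw [htraj.output_succ hx2, htrajh.output_succ hxh2] at hcube
  exact (Odd.pow_inj (by decide)).mp hcube

end IsEx01Trajectory

lemma eq_and_eq_of_div_eq_div_of_add_eq {K : Type*} [Field K] {a b a' b' : K}
    (hb : b ≠ 0) (hb' : b' ≠ 0) (hab : a + b ≠ 0)
    (hdiv : a / b = a' / b') (hadd : a + b = a' + b') : a = a' ∧ b = b' := by
  set y := a / b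
  have ha : a = y * b := (div_mul_cancel₀ a hb).symm
  have ha' : a' = y * b' := by rw [hdiv, div_mul_cancel₀ a' hb']
  have hy : y + 1 ≠ 0 := by
    rintro hy
    exact hab (by rw [ha, eq_neg_of_add_eq_zero_left hy]; ring)
  have hbb' : b = b' := mul_left_cancel₀ hy (by linear_combination hadd - ha + ha')
  exact ⟨by rw [ha, ha', hbb'], hbb'⟩

theorem stmt_13_general (x1 x2 u xh1 xh2 uh : ℕ → ℝ)
    (htraj : ∀ i, x1 (i + 1) = (x1 i + x2 i) ^ 3 * x2 i * u i ∧
      x2 (i + 1) = x2 i * u i)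
    (htrajh : ∀ i, xh1 (i + 1) = (xh1 i + xh2 i) ^ 3 * xh2 i * uh i ∧
      xh2 (i + 1) = xh2 i * uh i)
    (hx2 : ∀ i, x2 i ≠ 0) (hsum : ∀ i, x1 i + x2 i ≠ 0)
    (hxh2 : ∀ i, xh2 i ≠ 0)
    (hout : ∀ i, x1 i / x2 i = xh1 i / xh2 i) :
    ∀ i, x1 i = xh1 i ∧ x2 i = xh2 i ∧ u i = uh i := by
  have hstate : ∀ i, x1 i = xh1 i ∧ x2 i = xh2 i := fun i =>
    eq_and_eq_of_div_eq_div_of_add_eq (hx2 i) (hxh2 i) (hsum i) (hout i)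
      (IsEx01Trajectory.add_eq_of_output_eq htraj htrajh hx2 hxh2 hout i)
  intro i
  refine ⟨(hstate i).1, (hstate i).2, mul_left_cancel₀ (hx2 i) ?_⟩
  rw [← (htraj i).2, (hstate (i + 1)).2, (htrajh i).2, (hstate i).2]

/-- Let `(x¹,x²,u)` and `(x̂¹,x̂²,û)` be two trajectories of the example system
(ex-01): `x¹(i+1) = (x¹(i)+x²(i))³ x²(i) u(i)`, `x²(i+1) = x²(i) u(i)`, each
satisfying `x²(i) ≠ 0` and `x¹(i)+x²(i) ≠ 0` for all `i`.  If the outputs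
agree, `x¹(i)/x²(i) = x̂¹(i)/x̂²(i)` for all `i`, then the trajectories
coincide: the output `y = x¹/x²` determines the trajectory of (ex-01)
uniquely on this domain. -/
theorem stmt_13 (x1 x2 u xh1 xh2 uh : ℕ → ℝ)
    (htraj : ∀ i, x1 (i + 1) = (x1 i + x2 i) ^ 3 * x2 i * u i ∧
      x2 (i + 1) = x2 i * u i)
    (htrajh : ∀ i, xh1 (i + 1) = (xh1 i + xh2 i) ^ 3 * xh2 i * uh i ∧
      xh2 (i + 1) = xh2 i * uh i)
    (hx2 : ∀ i, x2 i ≠ 0) (hsum : ∀ i, x1 i + x2 i ≠ 0)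
    (hxh2 : ∀ i, xh2 i ≠ 0) (hsumh : ∀ i, xh1 i + xh2 i ≠ 0)
    (hout : ∀ i, x1 i / x2 i = xh1 i / xh2 i) :
    ∀ i, x1 i = xh1 i ∧ x2 i = xh2 i ∧ u i = uh i :=
  stmt_13_general x1 x2 u xh1 xh2 uh htraj htrajh hx2 hsum hxh2 hout
end

section
/- Let (x¹, x², x³, x⁴, u¹, u²) and (x̂¹, x̂², x̂³, x̂⁴, û¹, û²) be two trajectories of the system (ex-02) (in particular x⁴(i) + x¹(i)(u¹(i) − u²(i)) ≠ 0 for all i), each satisfying x²(i) ≠ 0 and x³(i) − x⁴(i) ≠ 0 for all i (and likewise for the hatted trajectory). If the output sequences agree, i.e. x¹(i)x²(i) = x̂¹(i)x̂²(i) and x³(i) − x⁴(i) = x̂³(i) − x̂⁴(i) for all i ∈ ℕ, then the trajectories coincide: xᵏ(i) = x̂ᵏ(i) for k = 1, …, 4 and uʲ(i) = ûʲ(i) for j = 1, 2, for all i. In other words, the outputs y¹ = x¹x², y² = x³ − x⁴ determine the trajectory of (ex-02) uniquely on this domain. -/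
/-- Let `(x¹,x²,x³,x⁴,u¹,u²)` and `(x̂¹,x̂²,x̂³,x̂⁴,û¹,û²)` be two trajectories of
the example system (ex-02), in particular `x⁴(i)+x¹(i)(u¹(i)−u²(i)) ≠ 0` for
all `i`, each satisfying `x²(i) ≠ 0` and `x³(i)−x⁴(i) ≠ 0` for all `i`
(and likewise for the hatted trajectory).  If the output sequences agree,
`x¹(i)x²(i) = x̂¹(i)x̂²(i)` and `x³(i)−x⁴(i) = x̂³(i)−x̂⁴(i)` for all `i`,
then the trajectories coincide: the outputs `y¹ = x¹x²`, `y² = x³−x⁴`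
determine the trajectory of (ex-02) uniquely on this domain. -/
theorem stmt_14 (x1 x2 x3 x4 u1 u2 xh1 xh2 xh3 xh4 uh1 uh2 : ℕ → ℝ)
    (hden : ∀ i, x4 i + x1 i * (u1 i - u2 i) ≠ 0)
    (hdenh : ∀ i, xh4 i + xh1 i * (uh1 i - uh2 i) ≠ 0)
    (htraj : ∀ i,
      x1 (i + 1) = x2 i / (x4 i + x1 i * (u1 i - u2 i)) ∧
      x2 (i + 1) = x4 i + x1 i * (u1 i - u2 i) ∧
      x3 (i + 1) = x2 i * u1 i + x4 i ∧
      x4 (i + 1) = x2 i * u1 i + x3 i * (u2 i - u1 i) + x4 i * (u1 i - u2 i + 1))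
    (htrajh : ∀ i,
      xh1 (i + 1) = xh2 i / (xh4 i + xh1 i * (uh1 i - uh2 i)) ∧
      xh2 (i + 1) = xh4 i + xh1 i * (uh1 i - uh2 i) ∧
      xh3 (i + 1) = xh2 i * uh1 i + xh4 i ∧
      xh4 (i + 1) = xh2 i * uh1 i + xh3 i * (uh2 i - uh1 i) + xh4 i * (uh1 i - uh2 i + 1))
    (hx2 : ∀ i, x2 i ≠ 0) (hx34 : ∀ i, x3 i - x4 i ≠ 0)
    (hxh2 : ∀ i, xh2 i ≠ 0) (hxh34 : ∀ i, xh3 i - xh4 i ≠ 0)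
    (hout1 : ∀ i, x1 i * x2 i = xh1 i * xh2 i)
    (hout2 : ∀ i, x3 i - x4 i = xh3 i - xh4 i) :
    ∀ i, x1 i = xh1 i ∧ x2 i = xh2 i ∧ x3 i = xh3 i ∧ x4 i = xh4 i ∧
      u1 i = uh1 i ∧ u2 i = uh2 i := by
  have h2 : ∀ i, x2 i = xh2 i := by
    intro i
    have hA : x1 (i + 1) * x2 (i + 1) = x2 i := by
      rw [(htraj i).1, (htraj i).2.1]; exact div_mul_cancel₀ _ (hden i)
    have hB : xh1 (i + 1) * xh2 (i + 1) = xh2 i := by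
      rw [(htrajh i).1, (htrajh i).2.1]; exact div_mul_cancel₀ _ (hdenh i)
    rw [← hA, ← hB]; exact hout1 (i + 1)
  have h1 : ∀ i, x1 i = xh1 i := by
    intro i
    have := hout1 i
    rw [h2 i] at this
    exact mul_right_cancel₀ (hxh2 i) this
  have hud : ∀ i, u1 i - u2 i = uh1 i - uh2 i := by
    intro i
    have hA : (x3 i - x4 i) * (u1 i - u2 i) = x3 (i + 1) - x4 (i + 1) := by
      rw [(htraj i).2.2.1, (htraj i).2.2.2]; ring
    have hB : (xh3 i - xh4 i) * (uh1 i - uh2 i) = xh3 (i + 1) - xh4 (i + 1) := by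
      rw [(htrajh i).2.2.1, (htrajh i).2.2.2]; ring
    have : (x3 i - x4 i) * (u1 i - u2 i) = (x3 i - x4 i) * (uh1 i - uh2 i) := by
      rw [hA, hout2 i, hB, hout2 (i + 1)]
    exact mul_left_cancel₀ (hx34 i) this
  have h4 : ∀ i, x4 i = xh4 i := by
    intro i
    have hA := (htraj i).2.1
    have hB := (htrajh i).2.1
    rw [← h1 i, ← hud i, ← h2 (i + 1), hA] at hB
    linarith
  have h3 : ∀ i, x3 i = xh3 i := by
    intro i
    have := hout2 i
    rw [h4 i] at this
    linarith
  have hu1 : ∀ i, u1 i = uh1 i := by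
    intro i
    have hA := (htraj i).2.2.1
    have hB := (htrajh i).2.2.1
    rw [← h3 (i + 1), hA, h2 i, h4 i] at hB
    have : xh2 i * u1 i = xh2 i * uh1 i := by linarith
    exact mul_left_cancel₀ (hxh2 i) this
  intro i
  have hu2 : u2 i = uh2 i := by
    have := hud i
    have := hu1 i
    linarith
  exact ⟨h1 i, h2 i, h3 i, h4 i, hu1 i, hu2⟩
end

section
/- Let y¹, y² : ℕ → ℝ be sequences with y¹(i) ≠ 0 and y²(i) ≠ 0 for all i. Define x²(i) = y¹(i+1), x¹(i) = y¹(i)/y¹(i+1), x⁴(i) = y¹(i+2) − y¹(i)y²(i+1)/(y¹(i+1)y²(i)), x³(i) = y²(i) + x⁴(i), u¹(i) = (x⁴(i+1) − x⁴(i) + y²(i+1))/y¹(i+1), and u²(i) = u¹(i) − y²(i+1)/y²(i). Then for all i ∈ ℕ the denominators are nonzero (in particular x⁴(i) + x¹(i)(u¹(i) − u²(i)) = y¹(i+2) ≠ 0), the sequences satisfy all four recursions of the system (ex-02), and the outputs are recovered as y¹(i) = x¹(i)x²(i) and y²(i) = x³(i) − x⁴(i). Hence y¹ = x¹x², y² =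 x³ − x⁴ are flat outputs of (ex-02): every such pair of output sequences parametrizes a trajectory. -/
/-! The inputs are chosen so that `u¹ − u² = y²(i+1)/y²(i)`. Multiplied by `x¹ = y¹(i)/y¹(i+1)` this
is exactly the correction term in `x⁴`, so the denominator of the first recursion is `y¹(i+2)`;
multiplied by `x³ − x⁴ = y²` it advances `y²` by one step; and `x² u¹` is the increment of `x⁴`
plus `y²(i+1)`. Each recursion is a linear combination of these three identities. -/

namespace Ex02

variable {K : Type*} [Field K] {y1 y2 x1 x2 x3 x4 u1 u2 : ℕ → K}

theorem x1_mul_sub_eq (hx1 : ∀ i, x1 i = y1 i / y1 (i + 1))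
    (hu2 : ∀ i, u2 i = u1 i - y2 (i + 1) / y2 i) (i : ℕ) :
    x1 i * (u1 i - u2 i) = y1 i * y2 (i + 1) / (y1 (i + 1) * y2 i) := by
  rw [hx1, hu2, sub_sub_cancel, div_mul_div_comm]

theorem x4_add_x1_mul_sub_eq
    (hx4 : ∀ i, x4 i = y1 (i + 2) - y1 i * y2 (i + 1) / (y1 (i + 1) * y2 i))
    (hx1 : ∀ i, x1 i = y1 i / y1 (i + 1)) (hu2 : ∀ i, u2 i = u1 i - y2 (i + 1) / y2 i)
    (i : ℕ) : x4 i + x1 i * (u1 i - u2 i) = y1 (i + 2) := by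
  rw [x1_mul_sub_eq hx1 hu2, hx4, sub_add_cancel]

theorem x2_mul_u1_eq (hx2 : ∀ i, x2 i = y1 (i + 1))
    (hu1 : ∀ i, u1 i = (x4 (i + 1) - x4 i + y2 (i + 1)) / y1 (i + 1)) {i : ℕ}
    (hy1 : y1 (i + 1) ≠ 0) : x2 i * u1 i = x4 (i + 1) - x4 i + y2 (i + 1) := by
  rw [hx2, hu1, mul_div_cancel₀ _ hy1]

theorem x3_sub_x4_mul_sub_eq (hx3 : ∀ i, x3 i = y2 i + x4 i)
    (hu2 : ∀ i, u2 i = u1 i - y2 (i + 1) / y2 i) {i : ℕ} (hy2 : y2 i ≠ 0) :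
    (x3 i - x4 i) * (u1 i - u2 i) = y2 (i + 1) := by
  rw [hx3, hu2, add_sub_cancel_right, sub_sub_cancel, mul_div_cancel₀ _ hy2]

end Ex02

/-- Let `y¹, y² : ℕ → ℝ` with `y¹(i) ≠ 0` and `y²(i) ≠ 0` for all `i`.  With
`x²(i) = y¹(i+1)`, `x¹(i) = y¹(i)/y¹(i+1)`,
`x⁴(i) = y¹(i+2) − y¹(i)y²(i+1)/(y¹(i+1)y²(i))`, `x³(i) = y²(i) + x⁴(i)`,
`u¹(i) = (x⁴(i+1) − x⁴(i) + y²(i+1))/y¹(i+1)` and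
`u²(i) = u¹(i) − y²(i+1)/y²(i)`, the denominators are nonzero (in particular
`x⁴(i) + x¹(i)(u¹(i) − u²(i)) = y¹(i+2) ≠ 0`), the sequences satisfy all four
recursions of the example system (ex-02), and the outputs are recovered as
`y¹(i) = x¹(i)x²(i)`, `y²(i) = x³(i) − x⁴(i)`.  Hence `y¹ = x¹x²`,
`y² = x³ − x⁴` are flat outputs of (ex-02): every such pair of output
sequences parametrizes a trajectory. -/
theorem stmt_15 (y1 y2 : ℕ → ℝ) (hy1 : ∀ i, y1 i ≠ 0) (hy2 : ∀ i, y2 i ≠ 0)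
    (x1 x2 x3 x4 u1 u2 : ℕ → ℝ)
    (hx2 : ∀ i, x2 i = y1 (i + 1))
    (hx1 : ∀ i, x1 i = y1 i / y1 (i + 1))
    (hx4 : ∀ i, x4 i = y1 (i + 2) - y1 i * y2 (i + 1) / (y1 (i + 1) * y2 i))
    (hx3 : ∀ i, x3 i = y2 i + x4 i)
    (hu1 : ∀ i, u1 i = (x4 (i + 1) - x4 i + y2 (i + 1)) / y1 (i + 1))
    (hu2 : ∀ i, u2 i = u1 i - y2 (i + 1) / y2 i) :
    ∀ i : ℕ,
      (x4 i + x1 i * (u1 i - u2 i) = y1 (i + 2) ∧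
        x4 i + x1 i * (u1 i - u2 i) ≠ 0) ∧
      (x1 (i + 1) = x2 i / (x4 i + x1 i * (u1 i - u2 i)) ∧
        x2 (i + 1) = x4 i + x1 i * (u1 i - u2 i) ∧
        x3 (i + 1) = x2 i * u1 i + x4 i ∧
        x4 (i + 1) = x2 i * u1 i + x3 i * (u2 i - u1 i) + x4 i * (u1 i - u2 i + 1)) ∧
      (y1 i = x1 i * x2 i ∧ y2 i = x3 i - x4 i) := by
  intro i
  have hden := Ex02.x4_add_x1_mul_sub_eq hx4 hx1 hu2 i
  have hdrift := Ex02.x2_mul_u1_eq hx2 hu1 (hy1 (i + 1))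
  have hshift := Ex02.x3_sub_x4_mul_sub_eq hx3 hu2 (hy2 i)
  refine ⟨⟨hden, hden ▸ hy1 (i + 2)⟩, ⟨?_, ?_, ?_, ?_⟩, ?_, ?_⟩
  · rw [hden, hx1, hx2]
  · rw [hden, hx2]
  · linear_combination hx3 (i + 1) - hdrift
  · linear_combination hshift - hdrift
  · rw [hx1, hx2, div_mul_cancel₀ _ (hy1 (i + 1))]
  · rw [hx3, add_sub_cancel_right]
end
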